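/- In a separated fibred locale F : F → B over a regular category, every span (p : Y → C, s : Y → X) with p prone and s supine factors through a span (p' : Y' → C, s' : Y' → X) with p' prone, s' supine, and (p', s') : Y' → C × X a monomorphism. -/

import Mathlib

/-!
The hypotheses on `B` make it a regular category, so `(g, h) : Z ⟶ A ⨯ X` factors as a regular
epi `e` followed by a mono `m`; the legs of the new span are `m` composed with the projections.
Separation together with Frobenius gives `∃_e e⁻¹ U ≅ U` for a regular epi `e`, so
precomposing both legs with `e` does not change `∃_{m₁} m₀⁻¹ C'`.
-/

open CategoryTheory CategoryTheory.Limits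

universe w v u

/-- A fibred locale over a base category `B`, presented as an indexed preorder:
a preordered fibre over each object, reindexing, indexed coproducts `ex` left adjoint
to reindexing, fibrewise finite products (top and binary meets) preserved by
reindexing, the Beck–Chevalley condition over pullback squares, and the Frobenius
condition.  (The total functor of such a fibration is automatically faithful.) -/
structure FibredLocale (B : Type u) [Category.{v} B] where
  Fib : B → Type w
  le : ∀ {X : B}, Fib X → Fib X → Prop
  le_refl : ∀ {X : B} (U : Fib X), le U U
  le_trans : ∀ {X : B} {U V W : Fib X}, le U V → le V W → le U W
  reind : ∀ {X Y : B}, (X ⟶ Y) → Fib Y → Fib X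
  reind_mono : ∀ {X Y : B} (f : X ⟶ Y) {U V : Fib Y}, le U V → le (reind f U) (reind f V)
  reind_id_le : ∀ {X : B} (U : Fib X), le (reind (𝟙 X) U) U
  le_reind_id : ∀ {X : B} (U : Fib X), le U (reind (𝟙 X) U)
  reind_comp_le : ∀ {X Y Z : B} (f : X ⟶ Y) (g : Y ⟶ Z) (U : Fib Z),
    le (reind (f ≫ g) U) (reind f (reind g U))
  le_reind_comp : ∀ {X Y Z : B} (f : X ⟶ Y) (g : Y ⟶ Z) (U : Fib Z),
    le (reind f (reind g U)) (reind (f ≫ g) U)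
  ex : ∀ {X Y : B}, (X ⟶ Y) → Fib X → Fib Y
  ex_adj : ∀ {X Y : B} (f : X ⟶ Y) (U : Fib X) (V : Fib Y),
    le (ex f U) V ↔ le U (reind f V)
  top : ∀ X : B, Fib X
  le_top : ∀ {X : B} (U : Fib X), le U (top X)
  inf : ∀ {X : B}, Fib X → Fib X → Fib X
  inf_le_left : ∀ {X : B} (U V : Fib X), le (inf U V) U
  inf_le_right : ∀ {X : B} (U V : Fib X), le (inf U V) V
  le_inf : ∀ {X : B} {U V W : Fib X}, le W U → le W V → le W (inf U V)
  le_reind_top : ∀ {X Y : B} (f : X ⟶ Y), le (top X) (reind f (top Y))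
  le_reind_inf : ∀ {X Y : B} (f : X ⟶ Y) (U V : Fib Y),
    le (inf (reind f U) (reind f V)) (reind f (inf U V))
  beck : ∀ {P X Y Z : B} (fst : P ⟶ X) (snd : P ⟶ Y) (g : X ⟶ Z) (h : Y ⟶ Z),
    IsPullback fst snd g h → ∀ U : Fib X,
      le (ex snd (reind fst U)) (reind h (ex g U)) ∧
      le (reind h (ex g U)) (ex snd (reind fst U))
  frobenius_le : ∀ {X Y : B} (f : X ⟶ Y) (U : Fib X) (V : Fib Y),
    le (ex f (inf U (reind f V))) (inf (ex f U) V)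
  le_frobenius : ∀ {X Y : B} (f : X ⟶ Y) (U : Fib X) (V : Fib Y),
    le (inf (ex f U) V) (ex f (inf U (reind f V)))

namespace FibredLocale

variable {B : Type u} [Category.{v} B] (L : FibredLocale.{w} B)

/-- Isomorphism in a fibre of a fibred locale: mutual inequality. -/
def equiv {X : B} (U V : L.Fib X) : Prop := L.le U V ∧ L.le V U

/-- A fibred locale is separated if `∃_e ⊤ ≅ ⊤` for every regular epimorphism `e`. -/
def Separated : Prop :=
  ∀ {X Y : B} (e : X ⟶ Y), Nonempty (RegularEpi e) → L.equiv (L.ex e (L.top X)) (L.top Y)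

end FibredLocale

theorem CategoryTheory.Regular.mk' {B : Type u} [Category.{v} B] [HasFiniteLimits B]
    (hcoeq : ∀ {X Y : B} (f : X ⟶ Y),
      HasCoequalizer (pullback.fst f f) (pullback.snd f f))
    (hstab : ∀ {X Y Z : B} (f : X ⟶ Y) (g : Z ⟶ Y),
      Nonempty (RegularEpi f) → Nonempty (RegularEpi (pullback.snd f g))) :
    Regular B where
  hasCoequalizer_of_isKernelPair {_ _ _ f _ _} hk :=
    have := hcoeq f
    hasColimit_of_iso (F := parallelPair (pullback.fst f f) (pullback.snd f f))
      (parallelPair.ext hk.isoPullback (Iso.refl _))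
  regularEpiIsStableUnderBaseChange := .of_forall_exists_isPullback fun f g _ hg ↦
    ⟨_, pullback.snd g f, pullback.fst g f, (IsPullback.of_hasPullback g f).flip,
      ⟨hstab g f hg.regularEpi⟩⟩

namespace FibredLocale

variable {B : Type u} [Category.{v} B] (L : FibredLocale.{w} B)

theorem equiv_symm {X : B} {U V : L.Fib X} (h : L.equiv U V) : L.equiv V U := ⟨h.2, h.1⟩

theorem equiv_trans {X : B} {U V W : L.Fib X} (h : L.equiv U V) (h' : L.equiv V W) :
    L.equiv U W := ⟨L.le_trans h.1 h'.1, L.le_trans h'.2 h.2⟩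

theorem le_reind_ex {X Y : B} (f : X ⟶ Y) (U : L.Fib X) : L.le U (L.reind f (L.ex f U)) :=
  (L.ex_adj f U _).1 (L.le_refl _)

theorem ex_reind_le {X Y : B} (f : X ⟶ Y) (V : L.Fib Y) : L.le (L.ex f (L.reind f V)) V :=
  (L.ex_adj f _ V).2 (L.le_refl _)

theorem ex_mono {X Y : B} (f : X ⟶ Y) {U V : L.Fib X} (h : L.le U V) :
    L.le (L.ex f U) (L.ex f V) :=
  (L.ex_adj f U _).2 (L.le_trans h (L.le_reind_ex f V))

theorem ex_congr {X Y : B} (f : X ⟶ Y) {U V : L.Fib X} (h : L.equiv U V) :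
    L.equiv (L.ex f U) (L.ex f V) := ⟨L.ex_mono f h.1, L.ex_mono f h.2⟩

theorem reind_comp {X Y Z : B} (f : X ⟶ Y) (g : Y ⟶ Z) (U : L.Fib Z) :
    L.equiv (L.reind (f ≫ g) U) (L.reind f (L.reind g U)) :=
  ⟨L.reind_comp_le f g U, L.le_reind_comp f g U⟩

theorem ex_comp {X Y Z : B} (f : X ⟶ Y) (g : Y ⟶ Z) (U : L.Fib X) :
    L.equiv (L.ex (f ≫ g) U) (L.ex g (L.ex f U)) := by
  constructor
  · refine (L.ex_adj _ _ _).2 (L.le_trans ?_ (L.le_reind_comp f g _))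
    exact L.le_trans (L.le_reind_ex f U) (L.reind_mono f (L.le_reind_ex g _))
  · refine (L.ex_adj _ _ _).2 ((L.ex_adj _ _ _).2 ?_)
    exact L.le_trans (L.le_reind_ex (f ≫ g) U) (L.reind_comp_le f g _)

/-- Frobenius turns `U ≤ ∃_e ⊤ ∧ U` into `U ≤ ∃_e (e⁻¹ U)`. -/
theorem ex_reind_of_regularEpi (hsep : L.Separated) {X Y : B} (e : X ⟶ Y) [IsRegularEpi e]
    (U : L.Fib Y) : L.equiv (L.ex e (L.reind e U)) U := by
  refine ⟨L.ex_reind_le e U, ?_⟩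
  have hU : L.le U (L.inf (L.ex e (L.top X)) U) :=
    L.le_inf (L.le_trans (L.le_top U) (hsep e IsRegularEpi.regularEpi).2) (L.le_refl U)
  refine L.le_trans hU (L.le_trans (L.le_frobenius e (L.top X) U) ?_)
  exact L.ex_mono e (L.inf_le_right _ _)

theorem ex_comp_reind_comp_of_regularEpi (hsep : L.Separated) {A X Z Z' : B} (e : Z ⟶ Z')
    [IsRegularEpi e] (m₀ : Z' ⟶ A) (m₁ : Z' ⟶ X) (C : L.Fib A) :
    L.equiv (L.ex (e ≫ m₁) (L.reind (e ≫ m₀) C)) (L.ex m₁ (L.reind m₀ C)) :=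
  L.equiv_trans (L.equiv_trans (L.ex_congr _ (L.reind_comp e m₀ C)) (L.ex_comp e m₁ _))
    (L.ex_congr _ (L.ex_reind_of_regularEpi hsep e _))

end FibredLocale

/-- The span `(g, h)` with `∃_h (g⁻¹ C') ≅ X'` encodes the prone-supine span over it. -/
theorem separated_span_factors_through_monic_span {B : Type u} [Category.{v} B]
    [HasFiniteLimits B]
    (hcoeq : ∀ {X Y : B} (f : X ⟶ Y),
      HasCoequalizer (pullback.fst f f) (pullback.snd f f))
    (hstab : ∀ {X Y Z : B} (f : X ⟶ Y) (g : Z ⟶ Y),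
      Nonempty (RegularEpi f) → Nonempty (RegularEpi (pullback.snd f g)))
    (L : FibredLocale.{w} B) (hsep : L.Separated)
    {A X Z : B} (C' : L.Fib A) (X' : L.Fib X) (g : Z ⟶ A) (h : Z ⟶ X)
    (hspan : L.equiv (L.ex h (L.reind g C')) X') :
    ∃ (Z' : B) (m₀ : Z' ⟶ A) (m₁ : Z' ⟶ X) (e : Z ⟶ Z'),
      e ≫ m₀ = g ∧ e ≫ m₁ = h ∧ Mono (prod.lift m₀ m₁) ∧
      L.equiv (L.ex m₁ (L.reind m₀ C')) X' := by
  have := Regular.mk' hcoeq hstab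
  let F := Regular.strongEpiMonoFactorisation (prod.lift g h)
  have hg : F.e ≫ F.m ≫ prod.fst = g := by rw [F.fac_assoc, prod.lift_fst]
  have hh : F.e ≫ F.m ≫ prod.snd = h := by rw [F.fac_assoc, prod.lift_snd]
  refine ⟨F.I, F.m ≫ prod.fst, F.m ≫ prod.snd, F.e, hg, hh, ?_, ?_⟩
  · rw [← prod.comp_lift, prod.lift_fst_snd, Category.comp_id]
    infer_instance
  · have hfac := L.ex_comp_reind_comp_of_regularEpi hsep F.e (F.m ≫ prod.fst) (F.m ≫ prod.snd) C'
    rw [hg, hh] at hfac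
    exact L.equiv_trans (L.equiv_symm hfac) hspan
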